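/- arXiv:math/0404151 — 6 statements merged into one kernel-verified Lean document; each statement's English description precedes it below -/
import Mathlib

section
/- Let S ⊆ ω₁ be a stationary set. Every S-Hausdorff pre-gap is a gap, i.e. it has no interpolation; consequently any pre-gap containing an S-Hausdorff pre-gap (on smaller index sets) is a gap. -/
open Set Filter

/-- The first uncountable ordinal. -/
noncomputable def omega1 : Ordinal := (Cardinal.aleph 1).ord

/-- `a ⊆* b` : almost inclusion of subsets of `ω`. -/
def AlSub (a b : Set ℕ) : Prop := (a \ b).Finite

/-- The excess number `X(a,b)` : the least `k` such that `a \ b ⊆ {0,…,k-1}`. -/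
noncomputable def excess (a b : Set ℕ) : ℕ := sInf {k | ∀ m ∈ a \ b, m < k}

/-- `D` is a club subset of `ω₁` : it is closed under suprema of its (nonempty)
bounded subsets and unbounded in `ω₁`. -/
def IsClub' (D : Set Ordinal) : Prop :=
  D ⊆ Iio omega1 ∧
  (∀ s ⊆ D, s.Nonempty → sSup s < omega1 → sSup s ∈ D) ∧
  (∀ α < omega1, ∃ δ ∈ D, α < δ)

/-- `S` is a stationary subset of `ω₁` : it meets every club. -/
def IsStationary' (S : Set Ordinal) : Prop :=
  S ⊆ Iio omega1 ∧ ∀ D, IsClub' D → (S ∩ D).Nonempty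

/-- `((a_i)_{i ∈ I}, (b_j)_{j ∈ J})` is a pre-gap: `I, J ⊆ ω₁` are uncountable,
the `a_i, b_j` are infinite subsets of `ω`, and
`a_{i₀} ⊆* a_{i₁} ⊆* b_{j₁} ⊆* b_{j₀}` whenever `i₀ < i₁` in `I`, `j₀ < j₁` in `J`. -/
def IsPregap (I J : Set Ordinal) (a b : Ordinal → Set ℕ) : Prop :=
  I ⊆ Iio omega1 ∧ J ⊆ Iio omega1 ∧ ¬ I.Countable ∧ ¬ J.Countable ∧
  (∀ i ∈ I, (a i).Infinite) ∧ (∀ j ∈ J, (b j).Infinite) ∧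
  (∀ i₀ ∈ I, ∀ i₁ ∈ I, i₀ < i₁ → AlSub (a i₀) (a i₁)) ∧
  (∀ i ∈ I, ∀ j ∈ J, AlSub (a i) (b j)) ∧
  (∀ j₀ ∈ J, ∀ j₁ ∈ J, j₀ < j₁ → AlSub (b j₁) (b j₀))

/-- `x` is an interpolation of the pre-gap: `a_i ⊆* x ⊆* b_j` for all `i ∈ I`, `j ∈ J`. -/
def IsInterpolation (I J : Set Ordinal) (a b : Ordinal → Set ℕ) (x : Set ℕ) : Prop :=
  (∀ i ∈ I, AlSub (a i) x) ∧ ∀ j ∈ J, AlSub x (b j)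

/-- The pre-gap is `S`-Hausdorff: for some club `D`, for every limit `δ ∈ S ∩ D`,
every `j ∈ J` with `j ≥ δ`, and every strictly increasing sequence `(i n)` of
elements of `I ∩ δ` cofinal in `δ`, `X(a_{i n}, b_j) → ∞`. -/
def SHausdorff (S I J : Set Ordinal) (a b : Ordinal → Set ℕ) : Prop :=
  ∃ D, IsClub' D ∧ ∀ δ ∈ S ∩ D, Order.IsSuccLimit δ →
    ∀ j ∈ J, δ ≤ j →
      ∀ i : ℕ → Ordinal, StrictMono i → (∀ n, i n ∈ I ∩ Iio δ) →
        (∀ β < δ, ∃ n, β ≤ i n) →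
        Tendsto (fun n => excess (a (i n)) (b j)) atTop atTop


section Aux

private lemma countable_Iio_of_lt {α : Ordinal} (h : α < omega1) :
    (Set.Iio α).Countable := by
  rw [Cardinal.countable_iff_lt_aleph_one, Ordinal.mk_Iio_ordinal,
    Cardinal.lift_lt_aleph_one]
  exact Cardinal.lt_ord.mp h

private lemma unbounded_of_uncountable {A : Set Ordinal} (hA : A ⊆ Set.Iio omega1)
    (h : ¬ A.Countable) : ∀ γ < omega1, ∃ i ∈ A, γ < i := by
  intro γ hγ
  by_contra hc
  push_neg at hc
  apply h
  refine (countable_Iio_of_lt (α := Order.succ γ) ?_).mono fun i hi =>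
    lt_of_le_of_lt (hc i hi) (Order.lt_succ γ)
  exact (Cardinal.isSuccLimit_ord (Cardinal.aleph0_le_aleph 1)).succ_lt hγ

private lemma excess_lt {a b : Set ℕ} (h : (a \ b).Finite) :
    ∀ m ∈ a \ b, m < excess a b := by
  have hne : {k | ∀ m ∈ a \ b, m < k}.Nonempty := by
    obtain ⟨k, hk⟩ := h.bddAbove
    exact ⟨k + 1, fun m hm => Nat.lt_succ_of_le (hk hm)⟩
  exact Nat.sInf_mem hne

private lemma excess_le {a b : Set ℕ} {k : ℕ} (h : ∀ m ∈ a \ b, m < k) :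
    excess a b ≤ k := Nat.sInf_le h

end Aux

/-- Any pre-gap containing an `S`-Hausdorff pre-gap (in particular any
`S`-Hausdorff pre-gap itself, taking `I' = I`, `J' = J`) is a gap:
it has no interpolation. -/
theorem sHausdorff_pregap_is_gap
    (S I J I' J' : Set Ordinal) (a b : Ordinal → Set ℕ)
    (hS : IsStationary' S)
    (hg : IsPregap I J a b)
    (hI' : I' ⊆ I) (hJ' : J' ⊆ J)
    (hI'unc : ¬ I'.Countable) (hJ'unc : ¬ J'.Countable)
    (hSH : SHausdorff S I' J' a b) :
    ¬ ∃ x : Set ℕ, IsInterpolation I J a b x := by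
  rintro ⟨x, hx1, hx2⟩
  obtain ⟨D, hD, hH⟩ := hSH
  obtain ⟨hIsub, hJsub, -, -, -, -, -, -, -⟩ := hg
  -- partition I' according to the value of excess (a i) x
  have hcover : I' = ⋃ k : ℕ, {i ∈ I' | excess (a i) x = k} := by
    ext i
    constructor
    · intro hi; exact Set.mem_iUnion.2 ⟨excess (a i) x, hi, rfl⟩
    · intro hi; obtain ⟨k, hk, -⟩ := Set.mem_iUnion.1 hi; exact hk
  obtain ⟨k, hk⟩ : ∃ k : ℕ, ¬ ({i ∈ I' | excess (a i) x = k}).Countable := by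
    by_contra hc
    push_neg at hc
    exact hI'unc (hcover ▸ Set.countable_iUnion hc)
  set A : Set Ordinal := {i ∈ I' | excess (a i) x = k} with hA
  have hAI' : A ⊆ I' := fun i hi => hi.1
  have hAsub : A ⊆ Set.Iio omega1 := fun i hi => hIsub (hI' (hAI' hi))
  have hAunb := unbounded_of_uncountable hAsub hk
  have hJ'sub : J' ⊆ Set.Iio omega1 := fun j hj => hJsub (hJ' hj)
  have hJ'unb := unbounded_of_uncountable hJ'sub hJ'unc
  -- the set of ordinals in which A is cofinal
  set E : Set Ordinal := {δ | 0 < δ ∧ ∀ β < δ, ∃ i ∈ A, β < i ∧ i < δ} with hE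
  have hEDbdd : ∀ s ⊆ E ∩ D, BddAbove s :=
    fun s hs => ⟨omega1, fun z hz => le_of_lt (hD.1 (hs hz).2)⟩
  have hEDclub : IsClub' (E ∩ D) := by
    refine ⟨fun z hz => hD.1 hz.2, ?_, ?_⟩
    · intro s hs hsne hsup
      refine ⟨⟨?_, ?_⟩, hD.2.1 s (fun z hz => (hs hz).2) hsne hsup⟩
      · obtain ⟨γ, hγ⟩ := hsne
        exact lt_of_lt_of_le (hs hγ).1.1 (le_csSup (hEDbdd s hs) hγ)
      · intro β hβ
        obtain ⟨γ, hγs, hβγ⟩ := exists_lt_of_lt_csSup hsne hβ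
        obtain ⟨i, hiA, hβi, hiγ⟩ := (hs hγs).1.2 β hβγ
        exact ⟨i, hiA, hβi, lt_of_lt_of_le hiγ (le_csSup (hEDbdd s hs) hγs)⟩
    · intro α hα
      have hstep : ∀ γ, γ < omega1 →
          ∃ d, (d ∈ D ∧ d < omega1) ∧ ∃ i ∈ A, γ < i ∧ i < d := by
        intro γ hγ
        obtain ⟨i, hiA, hγi⟩ := hAunb γ hγ
        obtain ⟨d, hdD, hid⟩ := hD.2.2 i (hAsub hiA)
        exact ⟨d, ⟨hdD, hD.1 hdD⟩, i, hiA, hγi, hid⟩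
      choose! F hF using hstep
      set g : ℕ → Ordinal := fun n => F^[n] (F α) with hgdef
      have hgsucc : ∀ n, g (n + 1) = F (g n) := by
        intro n; simp [hgdef, Function.iterate_succ_apply']
      have hginv : ∀ n, g n ∈ D ∧ g n < omega1 := by
        intro n
        induction n with
        | zero => exact (hF α hα).1
        | succ m ih => rw [hgsucc m]; exact (hF (g m) ih.2).1
      have hδlt : (⨆ n, g n) < omega1 := by
        have := Ordinal.iSup_lt_omega_one (f := g) (fun n => by simpa only [omega1, Cardinal.ord_aleph] using (hginv n).2)
        simpa only [omega1, Cardinal.ord_aleph] using this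
      have hrange : sSup (Set.range g) = ⨆ n, g n := rfl
      have hbddg : BddAbove (Set.range g) :=
        ⟨omega1, by rintro z ⟨n, rfl⟩; exact le_of_lt (hginv n).2⟩
      have hαg0 : α < g 0 := by
        obtain ⟨i, hiA, hαi, hiF⟩ := (hF α hα).2
        exact lt_trans hαi hiF
      have hδD : (⨆ n, g n) ∈ D := by
        rw [← hrange] at hδlt ⊢
        exact hD.2.1 _ (by rintro z ⟨n, rfl⟩; exact (hginv n).1) ⟨g 0, Set.mem_range_self 0⟩ hδlt
      have hαδ : α < ⨆ n, g n := lt_of_lt_of_le hαg0 (le_ciSup hbddg 0)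
      refine ⟨⨆ n, g n, ⟨⟨lt_of_le_of_lt (zero_le (a := α)) hαδ, ?_⟩, hδD⟩, hαδ⟩
      intro β hβ
      rw [← hrange] at hβ
      obtain ⟨z, ⟨n, rfl⟩, hβn⟩ := exists_lt_of_lt_csSup ⟨g 0, Set.mem_range_self 0⟩ hβ
      obtain ⟨i, hiA, hni, hiF⟩ := (hF (g n) (hginv n).2).2
      rw [← hgsucc n] at hiF
      exact ⟨i, hiA, lt_trans hβn hni, lt_of_lt_of_le hiF (le_ciSup hbddg (n + 1))⟩
  -- use stationarity to find a point of S in this club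
  obtain ⟨δ, hδS, hδE, hδD⟩ := hS.2 (E ∩ D) hEDclub
  have hδlt : δ < omega1 := hD.1 hδD
  have hδlim : Order.IsSuccLimit δ := by
    refine Ordinal.isSuccLimit_iff.2 ⟨ne_of_gt hδE.1, Order.isSuccPrelimit_of_succ_lt fun β hβ => ?_⟩
    obtain ⟨i, -, hβi, hiδ⟩ := hδE.2 β hβ
    exact lt_of_le_of_lt (Order.succ_le_of_lt hβi) hiδ
  -- pick j ∈ J' above δ
  obtain ⟨j, hjJ', hδj⟩ := hJ'unb δ hδlt
  -- build a strictly increasing cofinal sequence in A ∩ δ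
  obtain ⟨e, he⟩ :=
    (countable_Iio_of_lt hδlt).exists_eq_range ⟨0, hδE.1⟩
  have heδ : ∀ n, e n < δ := fun n => by
    have : e n ∈ Set.Iio δ := he ▸ Set.mem_range_self n
    exact this
  choose! G hG using hδE.2
  set q : ℕ → Ordinal :=
    fun n => Nat.rec (G (e 0)) (fun m p => G (max p (e (m + 1)))) n with hq
  have hqsucc : ∀ n, q (n + 1) = G (max (q n) (e (n + 1))) := fun n => rfl
  have hqinv : ∀ n, q n ∈ A ∧ q n < δ := by
    intro n
    induction n with
    | zero =>
      obtain ⟨hA1, -, hA3⟩ := hG (e 0) (heδ 0)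
      exact ⟨hA1, hA3⟩
    | succ m ih =>
      have hmax : max (q m) (e (m + 1)) < δ := max_lt ih.2 (heδ (m + 1))
      obtain ⟨hA1, -, hA3⟩ := hG _ hmax
      rw [hqsucc m]
      exact ⟨hA1, hA3⟩
  have hqmono : StrictMono q := by
    refine strictMono_nat_of_lt_succ fun n => ?_
    have hmax : max (q n) (e (n + 1)) < δ := max_lt (hqinv n).2 (heδ (n + 1))
    calc q n ≤ max (q n) (e (n + 1)) := le_max_left _ _
      _ < q (n + 1) := by rw [hqsucc n]; exact (hG _ hmax).2.1
  have hqcof : ∀ β < δ, ∃ n, β ≤ q n := by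
    intro β hβ
    obtain ⟨m, hm⟩ : ∃ m, e m = β := by
      have : β ∈ Set.range e := he ▸ hβ
      exact this
    rcases Nat.eq_zero_or_pos m with rfl | hmpos
    · exact ⟨0, le_of_lt (hm ▸ (hG (e 0) (heδ 0)).2.1)⟩
    · obtain ⟨m', rfl⟩ := Nat.exists_eq_succ_of_ne_zero (Nat.pos_iff_ne_zero.mp hmpos)
      refine ⟨m' + 1, le_of_lt ?_⟩
      have hmax : max (q m') (e (m' + 1)) < δ := max_lt (hqinv m').2 (heδ (m' + 1))
      calc β = e (m' + 1) := hm.symm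
        _ ≤ max (q m') (e (m' + 1)) := le_max_right _ _
        _ < q (m' + 1) := by rw [hqsucc m']; exact (hG _ hmax).2.1
  -- apply the Hausdorff condition
  have htend := hH δ ⟨hδS, hδD⟩ hδlim j hjJ' (le_of_lt hδj) q hqmono
    (fun n => ⟨hAI' (hqinv n).1, (hqinv n).2⟩) hqcof
  -- but the excess numbers are uniformly bounded, contradiction
  set M : ℕ := max k (excess x (b j)) with hM
  have hbound : ∀ n, excess (a (q n)) (b j) ≤ M := by
    intro n
    refine excess_le fun m hm => ?_
    by_cases hmx : m ∈ x
    · have : m ∈ x \ b j := ⟨hmx, hm.2⟩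
      exact lt_of_lt_of_le (excess_lt (hx2 j (hJ' hjJ')) m this) (le_max_right _ _)
    · have hiI : q n ∈ I := hI' (hAI' (hqinv n).1)
      have : m ∈ a (q n) \ x := ⟨hm.1, hmx⟩
      have hlt := excess_lt (hx1 (q n) hiI) m this
      rw [(hqinv n).1.2] at hlt
      exact lt_of_lt_of_le hlt (le_max_left _ _)
  obtain ⟨n, hn⟩ := (htend.eventually_ge_atTop (M + 1)).exists
  exact absurd (le_trans hn (hbound n)) (by omega)
end

section
/- The poset P satisfies Talayaco's condition and hence is c.c.c.: if S ⊆ ω₁ is stationary and (p_α)_{α∈S} is a family of conditions in P, then there is a stationary set S' ⊆ S such that every finite subset of {p_α : α ∈ S'} has a common extension in P. In particular, every antichain of P is countable. -/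
open Set

lemma omega1_pos : 0 < omega1 := by
  rw [omega1, Cardinal.lt_ord]
  simpa using Cardinal.aleph0_lt_aleph_one.trans_le' Cardinal.aleph0_pos.le

lemma omega1_isLimit : Order.IsSuccLimit omega1 := Cardinal.isSuccLimit_ord Cardinal.aleph0_lt_aleph_one.le

lemma succ_lt_omega1 {a : Ordinal} (h : a < omega1) : a + 1 < omega1 := by
  rw [Ordinal.add_one_eq_succ]; exact omega1_isLimit.succ_lt h

lemma bddAbove_small {s : Set Ordinal} (hs : s ⊆ Iio omega1) : BddAbove s :=
  ⟨omega1, fun _ hx => (hs hx).le⟩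

lemma countable_sSup_lt {s : Set Ordinal} (hc : s.Countable) (hs : s ⊆ Iio omega1) :
    sSup s < omega1 := by
  rcases s.eq_empty_or_nonempty with rfl | hne
  · simpa using omega1_pos
  · obtain ⟨f, rfl⟩ := hc.exists_eq_range hne
    rw [← iSup]
    have h := Ordinal.iSup_lt_omega_one (f := f) (fun n => by rw [← Cardinal.ord_aleph]; exact hs (mem_range_self n))
    rw [omega1, Cardinal.ord_aleph]; exact h

lemma countable_Iio_ord {γ : Ordinal} (h : γ < omega1) : (Iio γ).Countable := by
  rw [← Cardinal.le_aleph0_iff_set_countable, Ordinal.mk_Iio_ordinal,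
    Cardinal.lift_le_aleph0]
  have : γ.card < Cardinal.aleph 1 := (Cardinal.lt_ord).mp h
  rwa [← Cardinal.succ_aleph0, Order.lt_succ_iff] at this

lemma isClub_Iio : IsClub' (Iio omega1) := by
  refine ⟨Subset.rfl, fun s _ _ h => h, fun α hα => ⟨α + 1, succ_lt_omega1 hα, ?_⟩⟩
  rw [Ordinal.add_one_eq_succ]; exact Order.lt_succ α

lemma isClub_Ioi_inter {γ : Ordinal} (hγ : γ < omega1) : IsClub' (Ioi γ ∩ Iio omega1) := by
  refine ⟨inter_subset_right, ?_, ?_⟩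
  · intro s hs hne hlt
    obtain ⟨x, hx⟩ := hne
    refine ⟨lt_of_lt_of_le (hs hx).1 (le_csSup (bddAbove_small fun y hy => (hs hy).2) hx), hlt⟩
  · intro α hα
    refine ⟨max γ α + 1, ⟨?_, succ_lt_omega1 (max_lt hγ hα)⟩, ?_⟩
    · exact lt_of_le_of_lt (le_max_left γ α) (lt_of_lt_of_le (by rw [Ordinal.add_one_eq_succ]; exact Order.lt_succ _) le_rfl)
    · exact lt_of_le_of_lt (le_max_right γ α) (by rw [Ordinal.add_one_eq_succ]; exact Order.lt_succ _)

lemma isClub_iInter {ι : Type*} [Nonempty ι] [Countable ι] {C : ι → Set Ordinal}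
    (hC : ∀ i, IsClub' (C i)) : IsClub' (⋂ i, C i) := by
  obtain ⟨e, he⟩ := exists_surjective_nat ι
  refine ⟨(iInter_subset C (Classical.arbitrary ι)).trans (hC _).1, ?_, ?_⟩
  · intro s hs hne hlt
    exact mem_iInter.2 fun i => (hC i).2.1 s (hs.trans (iInter_subset C i)) hne hlt
  · intro α hα
    have step : ∀ (k : ℕ) (o : {o : Ordinal // o < omega1}), ∃ δ ∈ C (e k), o.1 < δ :=
      fun k o => (hC (e k)).2.2 o.1 o.2
    let x : ℕ → {o : Ordinal // o < omega1} := fun n =>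
      Nat.rec ⟨α, hα⟩ (fun n prev =>
        ⟨(step n.unpair.1 prev).choose, (hC (e n.unpair.1)).1 (step n.unpair.1 prev).choose_spec.1⟩) n
    have hx1 : ∀ n, (x n).1 < (x (n + 1)).1 := fun n => (step n.unpair.1 (x n)).choose_spec.2
    have hxC : ∀ n, (x (n + 1)).1 ∈ C (e n.unpair.1) := fun n => (step n.unpair.1 (x n)).choose_spec.1
    have hmono : StrictMono fun n => (x n).1 := strictMono_nat_of_lt_succ hx1
    set δ := sSup (range fun n => (x n).1) with hδdef
    have hrsub : (range fun n => (x n).1) ⊆ Iio omega1 := by rintro _ ⟨n, rfl⟩; exact (x n).2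
    have hbdd := bddAbove_small hrsub
    have hδlt : δ < omega1 := countable_sSup_lt (countable_range _) hrsub
    have hαδ : α < δ := lt_of_lt_of_le (hx1 0) (le_csSup hbdd (mem_range_self 1))
    refine ⟨δ, mem_iInter.2 fun i => ?_, hαδ⟩
    obtain ⟨k, rfl⟩ := he i
    set s := (fun n => (x (n + 1)).1) '' {n | n.unpair.1 = k} with hsdef
    have hsne : s.Nonempty := ⟨(x (Nat.pair k 0 + 1)).1, Nat.pair k 0, by simp [Nat.unpair_pair], rfl⟩
    have hssub : s ⊆ C (e k) := by rintro _ ⟨n, hn, rfl⟩; rw [← hn]; exact hxC n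
    have hsrange : s ⊆ range fun n => (x n).1 := by rintro _ ⟨n, _, rfl⟩; exact ⟨n + 1, rfl⟩
    have hsup : sSup s = δ := by
      refine le_antisymm (csSup_le_csSup hbdd hsne hsrange) (csSup_le ⟨_, mem_range_self 0⟩ ?_)
      rintro _ ⟨m, rfl⟩
      have hm : m ≤ Nat.pair k m + 1 := (Nat.right_le_pair k m).trans (Nat.le_succ _)
      refine le_trans (hmono.monotone hm) (le_csSup (hbdd.mono hsrange) ?_)
      exact ⟨Nat.pair k m, by simp [Nat.unpair_pair], rfl⟩
    rw [← hsup]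
    exact (hC (e k)).2.1 s hssub hsne (hsup ▸ hδlt)

lemma isClub_inter {D E : Set Ordinal} (hD : IsClub' D) (hE : IsClub' E) : IsClub' (D ∩ E) := by
  have h := isClub_iInter (C := fun b : Bool => bif b then D else E)
    (fun b => by cases b <;> simpa)
  have : (⋂ b : Bool, bif b then D else E) = D ∩ E := by
    ext x; simp [Bool.forall_bool, and_comm]
  rwa [this] at h

lemma stationary_inter_club {S D : Set Ordinal} (hS : IsStationary' S) (hD : IsClub' D) :
    IsStationary' (S ∩ D) := by
  refine ⟨fun x hx => hS.1 hx.1, fun D' hD' => ?_⟩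
  obtain ⟨α, hα⟩ := hS.2 _ (isClub_inter hD hD')
  exact ⟨α, ⟨hα.1, hα.2.1⟩, hα.2.2⟩

lemma isClub_diag {C : Ordinal → Set Ordinal} (hC : ∀ γ, IsClub' (C γ)) :
    IsClub' {α | α < omega1 ∧ ∀ γ < α, α ∈ C γ} := by
  have exists_in_iInter : ∀ β < omega1, ∀ α < omega1, ∃ δ, δ < omega1 ∧ α < δ ∧ ∀ γ < β, δ ∈ C γ := by
    intro β hβ α hα
    rcases eq_or_ne β 0 with rfl | hne
    · exact ⟨α + 1, succ_lt_omega1 hα, by rw [Ordinal.add_one_eq_succ]; exact Order.lt_succ α,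
        fun γ hγ => absurd hγ (by simp)⟩
    · have h1 : Nonempty ↥(Iio β) := ⟨⟨0, pos_iff_ne_zero.2 hne⟩⟩
      have h2 : Countable ↥(Iio β) := (countable_Iio_ord hβ).to_subtype
      have hclub := isClub_iInter (C := fun γ : ↥(Iio β) => C γ.1) (fun γ => hC γ.1)
      obtain ⟨δ, hδ, hαδ⟩ := hclub.2.2 α hα
      exact ⟨δ, hclub.1 hδ, hαδ, fun γ hγ => mem_iInter.mp hδ ⟨γ, hγ⟩⟩
  refine ⟨fun α hα => hα.1, ?_, ?_⟩
  · intro s hs hne hlt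
    refine ⟨hlt, fun γ hγ => ?_⟩
    have hbdd : BddAbove s := bddAbove_small fun x hx => (hs hx).1
    obtain ⟨x, hxs, hγx⟩ := (lt_csSup_iff hbdd hne).mp hγ
    have hs'ne : (s ∩ Ioi γ).Nonempty := ⟨x, hxs, hγx⟩
    have hsub : s ∩ Ioi γ ⊆ C γ := fun y hy => (hs hy.1).2 γ hy.2
    have hsup : sSup (s ∩ Ioi γ) = sSup s := by
      refine le_antisymm (csSup_le_csSup hbdd hs'ne inter_subset_left) (csSup_le hne ?_)
      intro y hy
      rcases le_or_gt y γ with h | h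
      · exact le_trans (le_trans h hγx.le) (le_csSup (hbdd.mono inter_subset_left) ⟨hxs, hγx⟩)
      · exact le_csSup (hbdd.mono inter_subset_left) ⟨hy, h⟩
    rw [← hsup]
    exact (hC γ).2.1 _ hsub hs'ne (by rw [hsup]; exact hlt)
  · intro α hα
    have step : ∀ o : {o : Ordinal // o < omega1}, ∃ δ, δ < omega1 ∧ o.1 < δ ∧ ∀ γ < o.1, δ ∈ C γ :=
      fun o => exists_in_iInter o.1 o.2 o.1 o.2
    let x : ℕ → {o : Ordinal // o < omega1} := fun n =>
      Nat.rec ⟨α, hα⟩ (fun _ prev => ⟨(step prev).choose, (step prev).choose_spec.1⟩) n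
    have hx1 : ∀ n, (x n).1 < (x (n + 1)).1 := fun n => (step (x n)).choose_spec.2.1
    have hxC : ∀ n γ, γ < (x n).1 → (x (n + 1)).1 ∈ C γ := fun n => (step (x n)).choose_spec.2.2
    have hmono : StrictMono fun n => (x n).1 := strictMono_nat_of_lt_succ hx1
    set δ := sSup (range fun n => (x n).1) with hδdef
    have hrsub : (range fun n => (x n).1) ⊆ Iio omega1 := by rintro _ ⟨n, rfl⟩; exact (x n).2
    have hbdd := bddAbove_small hrsub
    have hδlt : δ < omega1 := countable_sSup_lt (countable_range _) hrsub
    have hαδ : α < δ := lt_of_lt_of_le (hx1 0) (le_csSup hbdd (mem_range_self 1))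
    refine ⟨δ, ⟨hδlt, fun γ hγ => ?_⟩, hαδ⟩
    obtain ⟨_, ⟨n, rfl⟩, hγn⟩ := (lt_csSup_iff hbdd ⟨_, mem_range_self 0⟩).mp hγ
    set s := (fun m => (x (m + 1)).1) '' {m | n ≤ m} with hsdef
    have hsne : s.Nonempty := ⟨(x (n + 1)).1, n, show n ≤ n from le_rfl, rfl⟩
    have hssub : s ⊆ C γ := by
      rintro _ ⟨m, hm, rfl⟩
      exact hxC m γ (lt_of_lt_of_le hγn (hmono.monotone hm))
    have hsrange : s ⊆ range fun n => (x n).1 := by rintro _ ⟨m, _, rfl⟩; exact ⟨m + 1, rfl⟩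
    have hsup : sSup s = δ := by
      refine le_antisymm (csSup_le_csSup hbdd hsne hsrange) (csSup_le ⟨_, mem_range_self 0⟩ ?_)
      rintro _ ⟨m, rfl⟩
      refine le_trans (hmono.monotone (le_trans (le_max_left m n) (Nat.le_succ _))) (le_csSup (hbdd.mono hsrange) ?_)
      exact ⟨max m n, le_max_right m n, rfl⟩
    rw [← hsup]
    exact (hC γ).2.1 s hssub hsne (hsup ▸ hδlt)

lemma fodor {S : Set Ordinal} (hS : IsStationary' S) (f : Ordinal → Ordinal)
    (hf : ∀ α ∈ S, f α < α) : ∃ γ, γ < omega1 ∧ IsStationary' {α ∈ S | f α ≤ γ} := by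
  by_contra hcon
  push_neg at hcon
  have key : ∀ γ, ∃ D, IsClub' D ∧ (γ < omega1 → {α ∈ S | f α ≤ γ} ∩ D = ∅) := by
    intro γ
    by_cases hγ : γ < omega1
    · have h1 := hcon γ hγ
      rw [IsStationary', not_and_or] at h1
      rcases h1 with h | h
      · exact absurd (fun x hx => hS.1 hx.1) h
      · push_neg at h
        obtain ⟨D, hD, h2⟩ := h
        exact ⟨D, hD, fun _ => h2⟩
    · exact ⟨Iio omega1, isClub_Iio, fun h => absurd h hγ⟩
  choose D hD hdisj using key
  obtain ⟨α, hαS, hαΔ⟩ := hS.2 _ (isClub_diag hD)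
  have h1 : f α < α := hf α hαS
  have : α ∈ {β ∈ S | f β ≤ f α} ∩ D (f α) := ⟨⟨hαS, le_rfl⟩, hαΔ.2 (f α) h1⟩
  rw [hdisj (f α) (h1.trans hαΔ.1)] at this
  exact this

lemma stationary_partition {ι : Type*} [Countable ι] {S : Set Ordinal}
    (hS : IsStationary' S) (f : Ordinal → ι) : ∃ i, IsStationary' {α ∈ S | f α = i} := by
  by_contra hcon
  push_neg at hcon
  have hne : Nonempty ι := by
    obtain ⟨α, _⟩ := hS.2 _ isClub_Iio
    exact ⟨f α⟩
  have key : ∀ i, ∃ D, IsClub' D ∧ {α ∈ S | f α = i} ∩ D = ∅ := by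
    intro i
    have h1 := hcon i
    rw [IsStationary', not_and_or] at h1
    rcases h1 with h | h
    · exact absurd (fun x hx => hS.1 hx.1) h
    · push_neg at h
      obtain ⟨D, hD, h2⟩ := h
      exact ⟨D, hD, h2⟩
  choose D hD hdisj using key
  obtain ⟨α, hαS, hαD⟩ := hS.2 _ (isClub_iInter hD)
  have : α ∈ {β ∈ S | f β = f α} ∩ D (f α) := ⟨⟨hαS, rfl⟩, mem_iInter.mp hαD (f α)⟩
  rw [hdisj (f α)] at this
  exact this

lemma lift_omega1.{u,v} : Ordinal.lift.{v, u} omega1.{u} = omega1.{max u v} := by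
  rw [omega1, omega1, Cardinal.lift_ord, Cardinal.lift_aleph, Ordinal.lift_one]

noncomputable def down.{u,v} (δ : Ordinal.{v}) : Ordinal.{u} :=
  if h : Ordinal.lift.{u} δ ≤ Ordinal.lift.{v} omega1.{u} then (Set.mem_range.mp (Ordinal.mem_range_lift_of_le h)).choose
  else 0

lemma down_spec.{u,v} {δ : Ordinal.{v}} (h : δ < omega1.{v}) :
    Ordinal.lift.{v, u} (down.{u,v} δ) = Ordinal.lift.{u, v} δ := by
  have h1 : Ordinal.lift.{u} δ ≤ Ordinal.lift.{v} omega1.{u} := by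
    rw [lift_omega1]
    have h2 := Ordinal.lift_lt.{u}.2 h
    rw [lift_omega1] at h2
    exact h2.le
  rw [down, dif_pos h1]
  exact (Set.mem_range.mp (Ordinal.mem_range_lift_of_le h1)).choose_spec

lemma down_lt.{u,v} {δ : Ordinal.{v}} (h : δ < omega1.{v}) : down.{u,v} δ < omega1.{u} := by
  have h1 : Ordinal.lift.{v} (down.{u,v} δ) < Ordinal.lift.{v} omega1.{u} := by
    rw [down_spec h, lift_omega1]
    have h2 := Ordinal.lift_lt.{u}.2 h
    rwa [lift_omega1] at h2
  exact Ordinal.lift_lt.1 h1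

lemma down_inj.{u,v} {δ δ' : Ordinal.{v}} (h : δ < omega1) (h' : δ' < omega1)
    (heq : down.{u,v} δ = down.{u,v} δ') : δ = δ' := by
  have h1 : Ordinal.lift.{u} δ = Ordinal.lift.{u} δ' := by
    rw [← down_spec h, ← down_spec h', heq]
  exact Ordinal.lift_inj.1 h1

/-- The linear order `<_I` on `I = (ω₁ × {0}) ∪ (ω₁ × {1})` of order type
`ω₁ + ω₁*`: `⟨α,0⟩ <_I ⟨β,0⟩ <_I ⟨β,1⟩ <_I ⟨α,1⟩` whenever `α < β`. -/
def Ilt (i j : Ordinal × Fin 2) : Prop :=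
  (i.2 = 0 ∧ j.2 = 1) ∨ (i.2 = 0 ∧ j.2 = 0 ∧ i.1 < j.1) ∨
    (i.2 = 1 ∧ j.2 = 1 ∧ j.1 < i.1)

/-- A condition in the Hechler-style poset `P`.  A condition is a finite
function on `I = ω₁ × {0,1}` whose domain is closed under `⟨α,ε⟩ ↦ ⟨α,1-ε⟩`
(so it is coded by the finite set `dom ⊆ ω₁` of first coordinates), assigning
to each `i ∈ dom × {0,1}` a characteristic function of height `ht`, coded by
the set `v i ⊆ {0,…,ht-1}` it represents, with `[p(⟨α,0⟩)] ⊆ [p(⟨α,1⟩)]`. -/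
structure PCond where
  dom : Set Ordinal
  finite : dom.Finite
  small : ∀ α ∈ dom, α < omega1
  ht : ℕ
  v : Ordinal × Fin 2 → Set ℕ
  v_ht : ∀ α ∈ dom, ∀ ε : Fin 2, v (α, ε) ⊆ Iio ht
  v_sub : ∀ α ∈ dom, v (α, 0) ⊆ v (α, 1)

/-- The order on `P` : `p ≤ q` iff `dom p ⊆ dom q`, each `p(i)` is an initial
segment of `q(i)` (as characteristic functions, i.e. `[q(i)] ∩ ht p = [p(i)]`),
and `[q(i)] \ [p(i)] ⊆ [q(j)]` whenever `i <_I j` are in the domain of `p`. -/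
def PCond.le (p q : PCond) : Prop :=
  p.dom ⊆ q.dom ∧ p.ht ≤ q.ht ∧
  (∀ α ∈ p.dom, ∀ ε : Fin 2, q.v (α, ε) ∩ Iio p.ht = p.v (α, ε)) ∧
  ∀ i j : Ordinal × Fin 2, i.1 ∈ p.dom → j.1 ∈ p.dom → Ilt i j →
    q.v i \ p.v i ⊆ q.v j

/-- Compatibility in `P` : existence of a common extension. -/
def PCond.Compatible (p q : PCond) : Prop := ∃ r : PCond, p.le r ∧ q.le r

/-- The restriction `p↾A` of a condition `p` to a set `A ⊆ ω₁` (coding the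
flip-closed set of pairs `A × {0,1}`). -/
def PCond.restrict (p : PCond) (A : Set Ordinal) : PCond where
  dom := p.dom ∩ A
  finite := p.finite.inter_of_left A
  small := fun α hα => p.small α hα.1
  ht := p.ht
  v := p.v
  v_ht := fun α hα => p.v_ht α hα.1
  v_sub := fun α hα => p.v_sub α hα.1

universe uu vv

lemma talayaco (S : Set Ordinal.{uu}) (hS : IsStationary' S) (p : Ordinal.{uu} → PCond) :
    ∃ S' ⊆ S, IsStationary' S' ∧
      ∀ F : Set Ordinal, F ⊆ S' → F.Finite → ∃ r : PCond, ∀ α ∈ F, (p α).le r := by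
  classical
  have hdsm : ∀ α : Ordinal.{uu}, ∀ x ∈ down.{uu,0} '' (p α).dom, x < omega1 := by
    rintro α _ ⟨y, hy, rfl⟩
    exact down_lt ((p α).small y hy)
  set g : Ordinal.{uu} → Ordinal.{uu} :=
    fun α => sSup ((down.{uu,0} '' (p α).dom) ∩ Iio α) with hgdef
  have hS₀ : IsStationary' (S ∩ (Ioi 0 ∩ Iio omega1)) :=
    stationary_inter_club hS (isClub_Ioi_inter omega1_pos)
  have hg : ∀ α ∈ S ∩ (Ioi 0 ∩ Iio omega1), g α < α := by
    intro α hα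
    rcases ((down.{uu,0} '' (p α).dom) ∩ Iio α).eq_empty_or_nonempty with he | hne
    · have h0 : (0 : Ordinal) < α := hα.2.1
      show sSup ((down.{uu,0} '' (p α).dom) ∩ Iio α) < α
      rw [he, csSup_empty, Ordinal.bot_eq_zero]
      exact h0
    · exact (hne.csSup_mem (((p α).finite.image _).inter_of_left _)).2
  obtain ⟨γ₁, hγ₁, hS₁⟩ := fodor hS₀ g hg
  set S₁ := {α ∈ S ∩ (Ioi 0 ∩ Iio omega1) | g α ≤ γ₁} with hS₁def
  set γ₀ := γ₁ + 1 with hγ₀def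
  have hγ₀ : γ₀ < omega1 := succ_lt_omega1 hγ₁
  have hγ₁γ₀ : γ₁ < γ₀ := by rw [hγ₀def, Ordinal.add_one_eq_succ]; exact Order.lt_succ γ₁
  set h : Ordinal.{uu} → Ordinal.{uu} := fun β => sSup (down.{uu,0} '' (p β).dom) with hhdef
  have hh : ∀ β, h β < omega1 :=
    fun β => countable_sSup_lt ((p β).finite.image _).countable (hdsm β)
  set Δ := {α | α < omega1 ∧ ∀ γ < α, α ∈ Ioi (h γ) ∩ Iio omega1} with hΔdef
  have hΔ : IsClub' Δ := isClub_diag fun γ => isClub_Ioi_inter (hh γ)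
  set S₂ := (S₁ ∩ Δ) ∩ (Ioi γ₀ ∩ Iio omega1) with hS₂def
  have hS₂ : IsStationary' S₂ :=
    stationary_inter_club (stationary_inter_club hS₁ hΔ) (isClub_Ioi_inter hγ₀)
  set L : Set Ordinal.{0} := {δ | δ < omega1 ∧ down.{uu,0} δ < γ₀} with hLdef
  have hLc : L.Countable := by
    obtain ⟨f, hf⟩ := (countable_iff_exists_injOn).mp (countable_Iio_ord hγ₀)
    refine countable_iff_exists_injOn.mpr ⟨fun δ => f (down.{uu,0} δ), ?_⟩
    intro x hx y hy hxy
    exact down_inj hx.1 hy.1 (hf hx.2 hy.2 hxy)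
  set W : Set (Ordinal.{0} × Fin 2 × ℕ) := L ×ˢ (univ : Set (Fin 2 × ℕ)) with hWdef
  set T : Ordinal.{uu} → Set (Ordinal.{0} × Fin 2 × ℕ) := fun α =>
    {x | x.1 ∈ (p α).dom ∧ down.{uu,0} x.1 < γ₀ ∧ x.2.2 ∈ (p α).v (x.1, x.2.1)} with hTdef
  have hTfin : ∀ α, (T α).Finite := by
    intro α
    refine Set.Finite.subset ((p α).finite.prod (finite_univ.prod (finite_Iio (p α).ht))) ?_
    rintro ⟨γ, ε, k⟩ hx
    exact ⟨hx.1, mem_univ _, (p α).v_ht γ hx.1 ε hx.2.2⟩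
  have hTsub : ∀ α, T α ∈ {t : Set (Ordinal.{0} × Fin 2 × ℕ) | t.Finite ∧ t ⊆ W} := by
    intro α
    exact ⟨hTfin α, fun x hx => ⟨⟨(p α).small x.1 hx.1, hx.2.1⟩, mem_univ _⟩⟩
  haveI : Countable ↥{t : Set (Ordinal.{0} × Fin 2 × ℕ) | t.Finite ∧ t ⊆ W} :=
    (Set.countable_setOf_finite_subset (hLc.prod countable_univ)).to_subtype
  set F : Ordinal.{uu} → ℕ × ↥{t : Set (Ordinal.{0} × Fin 2 × ℕ) | t.Finite ∧ t ⊆ W} :=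
    fun α => ((p α).ht, ⟨T α, hTsub α⟩) with hFdef
  obtain ⟨i₀, hS'⟩ := stationary_partition hS₂ F
  set S' := {α ∈ S₂ | F α = i₀} with hS'def
  have hsub : S' ⊆ S := fun α hα => hα.1.1.1.1.1
  have hht : ∀ α ∈ S', (p α).ht = i₀.1 := fun α hα => congrArg Prod.fst hα.2
  have hTeq : ∀ α ∈ S', ∀ β ∈ S', T α = T β := by
    intro α hα β hβ
    have h1 := congrArg Prod.snd (hα.2.trans hβ.2.symm)
    exact congrArg Subtype.val h1
  have agree : ∀ α ∈ S', ∀ β ∈ S', ∀ γ, γ ∈ (p α).dom → γ ∈ (p β).dom →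
      ∀ ε : Fin 2, (p α).v (γ, ε) = (p β).v (γ, ε) := by
    have key : ∀ α ∈ S', ∀ β ∈ S', α < β → ∀ γ, γ ∈ (p α).dom → γ ∈ (p β).dom →
        ∀ ε : Fin 2, (p α).v (γ, ε) = (p β).v (γ, ε) := by
      intro α hα β hβ hab γ hγα hγβ ε
      have hγβlt : down.{uu,0} γ < β := by
        have hβΔ : β ∈ Δ := hβ.1.1.2
        exact lt_of_le_of_lt
          (le_csSup (bddAbove_small fun x hx => hdsm α x hx)
            (mem_image_of_mem _ hγα)) (hβΔ.2 α hab).1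
      have hγγ₀ : down.{uu,0} γ < γ₀ := by
        have hgβ : g β ≤ γ₁ := hβ.1.1.1.2
        have h2 : down.{uu,0} γ ≤ g β :=
          le_csSup (bddAbove_small fun x hx => hdsm β x hx.1)
            ⟨mem_image_of_mem _ hγβ, hγβlt⟩
        exact lt_of_le_of_lt (h2.trans hgβ) hγ₁γ₀
      have hTab := hTeq α hα β hβ
      ext k
      constructor
      · intro hk
        have hmem : ((γ, (ε, k)) : Ordinal.{0} × Fin 2 × ℕ) ∈ T α := ⟨hγα, hγγ₀, hk⟩
        rw [hTab] at hmem
        exact hmem.2.2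
      · intro hk
        have hmem : ((γ, (ε, k)) : Ordinal.{0} × Fin 2 × ℕ) ∈ T β := ⟨hγβ, hγγ₀, hk⟩
        rw [← hTab] at hmem
        exact hmem.2.2
    intro α hα β hβ γ hγα hγβ ε
    rcases lt_trichotomy α β with hlt | heq | hlt
    · exact key α hα β hβ hlt γ hγα hγβ ε
    · subst heq; rfl
    · exact (key β hβ α hα hlt γ hγβ hγα ε).symm
  refine ⟨S', hsub, hS', ?_⟩
  intro Fs hFs hFsfin
  set n₀ := i₀.1 with hn₀def
  have hsmall : ∀ γ ∈ ⋃ α ∈ Fs, (p α).dom, γ < omega1 := by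
    intro γ hγ
    simp only [mem_iUnion] at hγ
    obtain ⟨α, _, hγ⟩ := hγ
    exact (p α).small γ hγ
  set rv : Ordinal.{0} × Fin 2 → Set ℕ :=
    fun i => {k | ∃ α ∈ Fs, i.1 ∈ (p α).dom ∧ k ∈ (p α).v i} with hrvdef
  have hrv_ht : ∀ γ ∈ ⋃ α ∈ Fs, (p α).dom, ∀ ε : Fin 2, rv (γ, ε) ⊆ Iio n₀ := by
    intro γ _ ε k hk
    obtain ⟨α, hαF, hdom, hk⟩ := hk
    have h3 := (p α).v_ht γ hdom ε hk
    rwa [hht α (hFs hαF)] at h3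
  have hrv_sub : ∀ γ ∈ ⋃ α ∈ Fs, (p α).dom, rv (γ, 0) ⊆ rv (γ, 1) := by
    intro γ _ k hk
    obtain ⟨α, hαF, hdom, hk⟩ := hk
    exact ⟨α, hαF, hdom, (p α).v_sub γ hdom hk⟩
  set r : PCond := ⟨⋃ α ∈ Fs, (p α).dom, hFsfin.biUnion fun α _ => (p α).finite,
    hsmall, n₀, rv, hrv_ht, hrv_sub⟩ with hrdef
  have hr_eq : ∀ α ∈ Fs, ∀ i : Ordinal.{0} × Fin 2, i.1 ∈ (p α).dom → rv i = (p α).v i := by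
    intro α hα i hi
    obtain ⟨γ, ε⟩ := i
    ext k
    constructor
    · rintro ⟨β, hβF, hdomβ, hk⟩
      rw [← agree β (hFs hβF) α (hFs hα) γ hdomβ hi ε]
      exact hk
    · intro hk
      exact ⟨α, hα, hi, hk⟩
  refine ⟨r, fun α hαF => ⟨fun γ hγ => mem_biUnion hαF hγ, (hht α (hFs hαF)).le, ?_, ?_⟩⟩
  · intro γ hγ ε
    rw [show r.v (γ, ε) = rv (γ, ε) from rfl, hr_eq α hαF (γ, ε) hγ]
    exact inter_eq_self_of_subset_left ((p α).v_ht γ hγ ε)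
  · intro i j hi hj _
    rw [show r.v i = rv i from rfl, hr_eq α hαF i hi]
    simp

/-- The poset `P` satisfies Talayaco's condition: any family of conditions
indexed by a stationary set has a stationary subfamily any finite subset of
which has a common extension.  In particular `P` is c.c.c.: every antichain
is countable. -/

theorem P_talayaco_and_ccc :
    (∀ S : Set Ordinal, IsStationary' S → ∀ p : Ordinal → PCond,
      ∃ S' ⊆ S, IsStationary' S' ∧
        ∀ F : Set Ordinal, F ⊆ S' → F.Finite →
          ∃ r : PCond, ∀ α ∈ F, (p α).le r) ∧
    ∀ A : Set PCond, (A.Pairwise fun p q => ¬ p.Compatible q) → A.Countable := by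
  constructor
  · exact fun S hS p => talayaco S hS p
  · intro A hA
    by_contra hcount
    have h1 : Cardinal.aleph 1 ≤ Cardinal.mk A := by
      rw [← not_lt, ← Cardinal.countable_iff_lt_aleph_one]
      exact hcount
    have h2 : Cardinal.mk (Iio omega1 : Set Ordinal) ≤ Cardinal.mk A := by
      rw [Ordinal.mk_Iio_ordinal, omega1, Cardinal.card_ord, Cardinal.lift_aleph,
        Ordinal.lift_one]
      exact h1
    obtain ⟨emb⟩ := (Cardinal.le_def _ _).mp h2
    set p : Ordinal → PCond :=
      fun α => if h : α < omega1 then (emb ⟨α, h⟩ : PCond)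
        else (emb ⟨0, omega1_pos⟩ : PCond) with hpdef
    have hstat : IsStationary' (Iio omega1) := by
      refine ⟨Subset.rfl, fun D hD => ?_⟩
      obtain ⟨δ, hδ, _⟩ := hD.2.2 0 omega1_pos
      exact ⟨δ, hD.1 hδ, hδ⟩
    obtain ⟨S', hS'sub, hS'stat, hcompat⟩ := talayaco _ hstat p
    obtain ⟨α, hα⟩ := hS'stat.2 _ isClub_Iio
    obtain ⟨β, hβ⟩ := hS'stat.2 _ (isClub_Ioi_inter hα.2)
    have hαlt : α < omega1 := hα.2
    have hβlt : β < omega1 := hβ.2.2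
    have hαβ : α < β := hβ.2.1
    obtain ⟨r, hr⟩ := hcompat {α, β}
      (by rintro x (rfl | rfl); exacts [hα.1, hβ.1]) ((finite_singleton β).insert α)
    have hpα : p α = (emb ⟨α, hαlt⟩ : PCond) := dif_pos hαlt
    have hpβ : p β = (emb ⟨β, hβlt⟩ : PCond) := dif_pos hβlt
    have hne : ((emb ⟨α, hαlt⟩ : ↥A) : PCond) ≠ ((emb ⟨β, hβlt⟩ : ↥A) : PCond) := by
      intro hcon
      have h3 : (⟨α, hαlt⟩ : ↥(Iio omega1)) = ⟨β, hβlt⟩ :=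
        emb.injective (Subtype.coe_injective hcon)
      exact hαβ.ne (congrArg Subtype.val h3)
    refine hA (emb ⟨α, hαlt⟩).2 (emb ⟨β, hβlt⟩).2 hne ⟨r, ?_, ?_⟩
    · rw [← hpα]; exact hr α (mem_insert _ _)
    · rw [← hpβ]; exact hr β (mem_insert_of_mem _ rfl)
end

section
/- If p and q are conditions in the poset P with dom(p) = dom(q), then p and q are compatible in P if and only if p ≤ q or q ≤ p. -/
open Set

/-- `D` is a club subset of `ω₁` : it is closed under suprema of its (nonempty)
bounded subsets and unbounded in `ω₁`. -/
def IsClubOmega1 (D : Set Ordinal) : Prop :=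
  D ⊆ Iio omega1 ∧
  (∀ s ⊆ D, s.Nonempty → sSup s < omega1 → sSup s ∈ D) ∧
  (∀ α < omega1, ∃ δ ∈ D, α < δ)

/-- `S` is a stationary subset of `ω₁` : it meets every club. -/
def IsStationaryOmega1 (S : Set Ordinal) : Prop :=
  S ⊆ Iio omega1 ∧ ∀ D, IsClubOmega1 D → (S ∩ D).Nonempty

lemma PCond.le_refl' (q : PCond) : q.le q :=
  ⟨subset_rfl, le_rfl, fun α hα ε => inter_eq_left.mpr (q.v_ht α hα ε),
    fun _ _ _ _ _ x hx => (hx.2 hx.1).elim⟩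

lemma PCond.le_of_common (p q r : PCond) (h : p.dom = q.dom)
    (hpr : p.le r) (hqr : q.le r) (hht : p.ht ≤ q.ht) : p.le q := by
  obtain ⟨_, hpr2, hpr3, hpr4⟩ := hpr
  obtain ⟨_, hqr2, hqr3, hqr4⟩ := hqr
  refine ⟨h ▸ subset_rfl, hht, ?_, ?_⟩
  · intro α hα ε
    have h1 := hpr3 α hα ε
    have h2 := hqr3 α (h ▸ hα) ε
    rw [← h1, ← h2, inter_assoc, Iio_inter_Iio, min_eq_right hht]
  · intro i j hi hj hij x hx
    have hxr : x ∈ r.v i := by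
      rw [← hqr3 i.1 (h ▸ hi) i.2] at hx; exact hx.1.1
    have hxq : x ∈ Iio (q.ht : ℕ) := by
      rw [← hqr3 i.1 (h ▸ hi) i.2] at hx; exact hx.1.2
    have : x ∈ r.v j := hpr4 i j hi hj hij ⟨hxr, hx.2⟩
    have := hqr3 j.1 (h ▸ hj) j.2
    rw [← this]
    exact ⟨‹x ∈ r.v j›, hxq⟩

/-- Conditions in `P` with the same domain are compatible iff they are
comparable. -/
theorem P_same_dom_compatible_iff (p q : PCond) (h : p.dom = q.dom) :
    p.Compatible q ↔ p.le q ∨ q.le p := by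
  constructor
  · rintro ⟨r, hpr, hqr⟩
    rcases le_total p.ht q.ht with hht | hht
    · exact Or.inl (PCond.le_of_common p q r h hpr hqr hht)
    · exact Or.inr (PCond.le_of_common q p r h.symm hqr hpr hht)
  · rintro (hle | hle)
    · exact ⟨q, hle, q.le_refl'⟩
    · exact ⟨p, p.le_refl', hle⟩
end

section
/- Let p and q be conditions in the poset P of the same height, let C = dom(p) ∩ dom(q), and suppose p↾C = q↾C. Then p ∪ q is a condition in P extending both p and q; in particular p and q are compatible. -/
open Set

/-- If `p, q ∈ P` have the same height and agree on `C = dom p ∩ dom q`,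
then `p ∪ q` is a condition in `P` extending both; in particular `p` and `q`
are compatible. -/
theorem P_union_of_agreeing (p q : PCond) (hht : p.ht = q.ht)
    (hC : ∀ α ∈ p.dom ∩ q.dom, ∀ ε : Fin 2, p.v (α, ε) = q.v (α, ε)) :
    (∃ r : PCond, r.dom = p.dom ∪ q.dom ∧ r.ht = p.ht ∧
      (∀ α ∈ p.dom, ∀ ε : Fin 2, r.v (α, ε) = p.v (α, ε)) ∧
      (∀ α ∈ q.dom, ∀ ε : Fin 2, r.v (α, ε) = q.v (α, ε)) ∧
      p.le r ∧ q.le r) ∧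
    p.Compatible q := by
  classical
  set r : PCond :=
    { dom := p.dom ∪ q.dom
      finite := p.finite.union q.finite
      small := fun α hα => hα.elim (p.small α) (q.small α)
      ht := p.ht
      v := fun i => if i.1 ∈ p.dom then p.v i else q.v i
      v_ht := by
        intro α hα ε
        by_cases h : α ∈ p.dom
        · simpa [h] using p.v_ht α h ε
        · have hq : α ∈ q.dom := hα.resolve_left h
          simpa [h, hht] using q.v_ht α hq ε
      v_sub := by
        intro α hα
        by_cases h : α ∈ p.dom
        · simpa [h] using p.v_sub α h
        · have hq : α ∈ q.dom := hα.resolve_left h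
          simpa [h] using q.v_sub α hq } with hr
  have hvp : ∀ α ∈ p.dom, ∀ ε : Fin 2, r.v (α, ε) = p.v (α, ε) := by
    intro α hα ε; simp [hr, hα]
  have hvq : ∀ α ∈ q.dom, ∀ ε : Fin 2, r.v (α, ε) = q.v (α, ε) := by
    intro α hα ε
    by_cases h : α ∈ p.dom
    · simpa [hr, h] using hC α ⟨h, hα⟩ ε
    · simp [hr, h]
  have hple : p.le r := by
    refine ⟨subset_union_left, le_refl _, ?_, ?_⟩
    · intro α hα ε
      rw [hvp α hα ε]
      exact inter_eq_left.2 (p.v_ht α hα ε)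
    · intro i j hi hj _
      rw [show r.v i = p.v i from hvp i.1 hi i.2]
      simp
  have hqle : q.le r := by
    refine ⟨subset_union_right, hht.ge, ?_, ?_⟩
    · intro α hα ε
      rw [hvq α hα ε, ← hht]
      exact inter_eq_left.2 (by rw [hht]; exact q.v_ht α hα ε)
    · intro i j hi hj _
      rw [show r.v i = q.v i from hvq i.1 hi i.2]
      simp
  exact ⟨⟨r, rfl, rfl, hvp, hvq, hple, hqle⟩, r, hple, hqle⟩
end

section
/- Canonical amalgamation in the poset P: let p, q ∈ P, let A = dom(q), and suppose A is closed under the map ⟨α,ε⟩ ↦ ⟨α,1−ε⟩, that q ≥ p↾A, and that height(q) ≥ height(p). Then there exists a condition r ∈ P with dom(r) = dom(p) ∪ dom(q) such that r↾A = q, r ≥ p, and r ≥ q. (Concretely, one may take r(i) = q(i) for i ∈ dom(q), and for i ∈ dom(p) \ A define r(i) of height n = height(q) by p(i) ⊆ r(i) and [r(i)] \ [p(i)] = ⋃{ [q(k)] \ m : k <_I i, k ∈ A ∩ dom(p) }, where m = height(p).) -/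
open Set

/-- `D` is a club subset of `ω₁` : it is closed under suprema of its (nonempty)
bounded subsets and unbounded in `ω₁`. -/
def PIsClub (D : Set Ordinal) : Prop :=
  D ⊆ Iio omega1 ∧
  (∀ s ⊆ D, s.Nonempty → sSup s < omega1 → sSup s ∈ D) ∧
  (∀ α < omega1, ∃ δ ∈ D, α < δ)

/-- `S` is a stationary subset of `ω₁` : it meets every club. -/
def PIsStationary (S : Set Ordinal) : Prop :=
  S ⊆ Iio omega1 ∧ ∀ D, PIsClub D → (S ∩ D).Nonempty

lemma Ilt_trans' : ∀ {i j k : Ordinal × Fin 2}, Ilt i j → Ilt j k → Ilt i k := by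
  rintro ⟨a, ea⟩ ⟨b, eb⟩ ⟨c, ec⟩ h1 h2
  simp only [Ilt] at *
  fin_cases ea <;> fin_cases eb <;> fin_cases ec <;> simp_all
  · exact h1.trans h2
  · exact h2.trans h1

lemma Ilt_snd_mono {k : Ordinal × Fin 2} {α : Ordinal} (h : Ilt k (α, 0)) :
    Ilt k (α, 1) := by
  obtain ⟨a, ea⟩ := k
  simp only [Ilt] at *
  fin_cases ea <;> simp_all

/-- Canonical amalgamation `p ∨ q` in `P`: if `A = dom q` (a flip-closed set,
coded by a set of ordinals), `q ≥ p↾A` and `ht q ≥ ht p`, then there is a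
condition `r` with `dom r = dom p ∪ dom q`, `r↾A = q` (i.e. `r` has height
`ht q` and agrees with `q` on `A`), `r ≥ p` and `r ≥ q`. -/
theorem P_canonical_amalgamation (p q : PCond)
    (hle : (p.restrict q.dom).le q) (hht : p.ht ≤ q.ht) :
    ∃ r : PCond, r.dom = p.dom ∪ q.dom ∧ r.ht = q.ht ∧
      (∀ α ∈ q.dom, ∀ ε : Fin 2, r.v (α, ε) = q.v (α, ε)) ∧
      p.le r ∧ q.le r := by
  classical
  obtain ⟨-, -, hq1, hq2⟩ := hle
  set m := p.ht with hm
  set S : Ordinal × Fin 2 → Set ℕ := fun i =>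
    {x | m ≤ x ∧ ∃ k : Ordinal × Fin 2, k.1 ∈ p.dom ∧ k.1 ∈ q.dom ∧ Ilt k i ∧ x ∈ q.v k}
    with hS
  have hSmono : ∀ {i j : Ordinal × Fin 2}, Ilt i j → S i ⊆ S j := by
    rintro i j hij x ⟨hx, k, h1, h2, h3, h4⟩
    exact ⟨hx, k, h1, h2, Ilt_trans' h3 hij, h4⟩
  have hSub : ∀ i, S i ⊆ Iio q.ht := by
    rintro i x ⟨hx, k, h1, h2, h3, h4⟩
    exact q.v_ht k.1 h2 k.2 (by simpa using h4)
  have hSq : ∀ j : Ordinal × Fin 2, j.1 ∈ p.dom → j.1 ∈ q.dom → S j ⊆ q.v j := by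
    rintro j hjp hjq x ⟨hx, k, h1, h2, h3, h4⟩
    have hk : q.v k \ p.v k ⊆ q.v j := hq2 k j ⟨h1, h2⟩ ⟨hjp, hjq⟩ h3
    apply hk
    refine ⟨h4, fun hxp => ?_⟩
    have := p.v_ht k.1 h1 k.2 hxp
    simp only [mem_Iio] at this
    omega
  set rv : Ordinal × Fin 2 → Set ℕ := fun i =>
    if i.1 ∈ q.dom then q.v i else if i.1 ∈ p.dom then p.v i ∪ S i else ∅ with hrv
  have hpv_ht : ∀ α ∈ p.dom, ∀ ε : Fin 2, p.v (α, ε) ⊆ Iio q.ht :=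
    fun α hα ε => (p.v_ht α hα ε).trans (Iio_subset_Iio hht)
  have hrq : ∀ i : Ordinal × Fin 2, i.1 ∈ q.dom → rv i = q.v i := by
    intro i hi; simp [hrv, hi]
  have hrp : ∀ i : Ordinal × Fin 2, i.1 ∈ p.dom → i.1 ∉ q.dom → rv i = p.v i ∪ S i := by
    intro i hi hni; simp [hrv, hi, hni]
  refine ⟨⟨p.dom ∪ q.dom, p.finite.union q.finite,
    fun α hα => hα.elim (p.small α) (q.small α), q.ht, rv, ?_, ?_⟩, rfl, rfl, ?_, ?_, ?_⟩
  · -- v_ht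
    intro α hα ε
    by_cases hq : α ∈ q.dom
    · rw [hrq _ hq]; exact q.v_ht α hq ε
    · have hp : α ∈ p.dom := hα.resolve_right hq
      rw [hrp _ hp hq]
      exact union_subset (hpv_ht α hp ε) (hSub _)
  · -- v_sub
    intro α hα
    by_cases hq : α ∈ q.dom
    · rw [hrq (α, 0) hq, hrq (α, 1) hq]; exact q.v_sub α hq
    · have hp : α ∈ p.dom := hα.resolve_right hq
      rw [hrp (α, 0) hp hq, hrp (α, 1) hp hq]
      exact union_subset_union (p.v_sub α hp) (hSmono (by simp [Ilt]))
  · -- r agrees with q on q.dom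
    intro α hα ε; exact hrq (α, ε) hα
  · -- p ≤ r
    refine ⟨subset_union_left, hht, ?_, ?_⟩
    · intro α hα ε
      dsimp only
      by_cases hq : α ∈ q.dom
      · rw [hrq (α, ε) hq]; exact hq1 α ⟨hα, hq⟩ ε
      · rw [hrp (α, ε) hα hq, union_inter_distrib_right]
        have h1 : p.v (α, ε) ∩ Iio m = p.v (α, ε) :=
          inter_eq_left.mpr (p.v_ht α hα ε)
        have h2 : S (α, ε) ∩ Iio m = ∅ := by
          ext x; simp only [mem_inter_iff, mem_Iio, mem_empty_iff_false, iff_false]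
          rintro ⟨⟨hx, -⟩, hx2⟩; omega
        rw [h1, h2, union_empty]
    · intro i j hip hjp hij x hx
      dsimp only at hx ⊢
      by_cases hjq : j.1 ∈ q.dom
      · rw [hrq j hjq]
        by_cases hiq : i.1 ∈ q.dom
        · rw [hrq i hiq] at hx
          exact hq2 i j ⟨hip, hiq⟩ ⟨hjp, hjq⟩ hij hx
        · rw [hrp i hip hiq] at hx
          obtain ⟨hx1, hx2⟩ := hx
          rcases hx1 with h | h
          · exact absurd h hx2
          · exact hSq j hjp hjq (hSmono hij h)
      · rw [hrp j hjp hjq]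
        by_cases hiq : i.1 ∈ q.dom
        · rw [hrq i hiq] at hx
          refine Or.inr ⟨?_, i, hip, hiq, hij, hx.1⟩
          by_contra hlt
          push_neg at hlt
          have hmem : x ∈ q.v (i.1, i.2) ∩ Iio (p.restrict q.dom).ht :=
            ⟨by simpa using hx.1, hlt⟩
          rw [hq1 i.1 ⟨hip, hiq⟩ i.2] at hmem
          exact hx.2 (by simp at hmem; exact hmem)
        · rw [hrp i hip hiq] at hx
          obtain ⟨hx1, hx2⟩ := hx
          rcases hx1 with h | h
          · exact absurd h hx2
          · exact Or.inr (hSmono hij h)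
  · -- q ≤ r
    refine ⟨subset_union_right, le_rfl, ?_, ?_⟩
    · intro α hα ε
      dsimp only
      rw [hrq (α, ε) hα]
      exact inter_eq_left.mpr (q.v_ht α hα ε)
    · intro i j hiq hjq hij x hx
      dsimp only at hx
      rw [hrq i hiq] at hx
      exact absurd hx.1 hx.2
end

section
/- Extension/density in the poset P: for every condition p ∈ P, every i ∈ dom(p), and every k ∈ ω with k ≥ height(p), there exists a condition p' ∈ P with p' ≥ p, height(p') > k, and k ∈ [p'(i)]. Moreover, for any finite set F ⊆ ω₁ there is p' ≥ p whose domain contains ⟨α,0⟩ and ⟨α,1⟩ for every α ∈ F. -/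
open Set

/-- Extension/density in `P`: any condition has extensions of arbitrarily
large height putting a prescribed number `k ≥ ht p` into `[p'(i)]` for a
prescribed `i ∈ dom p`, and extensions whose domain contains any prescribed
finite subset of `ω₁`. -/
theorem P_density :
    (∀ p : PCond, ∀ α ∈ p.dom, ∀ ε : Fin 2, ∀ k : ℕ, p.ht ≤ k →
      ∃ p' : PCond, p.le p' ∧ k < p'.ht ∧ k ∈ p'.v (α, ε)) ∧
    ∀ p : PCond, ∀ F : Set Ordinal, F.Finite → (∀ α ∈ F, α < omega1) →
      ∃ p' : PCond, p.le p' ∧ F ⊆ p'.dom := by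
  classical
  constructor
  · intro p α hα ε k hk
    refine ⟨⟨p.dom, p.finite, p.small, k + 1, fun i => p.v i ∪ {k}, ?_, ?_⟩,
      ⟨subset_rfl, hk.trans (Nat.le_succ k), ?_, ?_⟩, by simp, Or.inr rfl⟩
    · intro β hβ δ n hn
      rcases hn with hn | hn
      · have h1 := p.v_ht β hβ δ hn
        simp only [Set.mem_Iio] at h1 ⊢
        omega
      · simp only [Set.mem_singleton_iff] at hn
        simp [Set.mem_Iio, hn]
    · intro β hβ n hn
      rcases hn with hn | hn
      · exact Or.inl (p.v_sub β hβ hn)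
      · exact Or.inr hn
    · intro β hβ δ
      ext n
      simp only [Set.mem_inter_iff, Set.mem_union, Set.mem_singleton_iff, Set.mem_Iio]
      constructor
      · rintro ⟨hn | hn, hlt⟩
        · exact hn
        · omega
      · intro hn
        exact ⟨Or.inl hn, p.v_ht β hβ δ hn⟩
    · rintro i j hi hj _ n hn
      rcases hn.1 with h | h
      · exact absurd h hn.2
      · exact Or.inr h
  · intro p F hF hFsmall
    refine ⟨⟨p.dom ∪ F, p.finite.union hF, ?_, p.ht,
      fun i => if i.1 ∈ p.dom then p.v i else ∅, ?_, ?_⟩,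
      ⟨Set.subset_union_left, le_rfl, ?_, ?_⟩, Set.subset_union_right⟩
    · rintro β (hβ | hβ)
      · exact p.small β hβ
      · exact hFsmall β hβ
    · intro β hβ δ
      by_cases h : β ∈ p.dom
      · simpa [h] using p.v_ht β h δ
      · simp [h]
    · intro β hβ
      by_cases h : β ∈ p.dom
      · simpa [h] using p.v_sub β h
      · simp [h]
    · intro β hβ δ
      simp only [hβ, if_pos]
      exact Set.inter_eq_left.mpr (p.v_ht β hβ δ)
    · intro i j hi hj _
      simp [hi]
end
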